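/- arXiv:1701.01603 — 2 statements merged into one kernel-verified Lean document; each statement's English description precedes it below -/
import Mathlib

section
/- In counting p(F(ν)) for the fattening of a necklace ν on letters {1,...,k+1} (k+1 odd), selections that choose at least two beads from the same cluster contribute zero in total: the set of such selections can be partitioned into pairs with opposite permutation parity. -/
open scoped Classical

/-- Positions of the fattening `F(ν)` of a necklace `w : Fin m → ℕ` on letters
`{0,…,k}`: the bead of origin `b` together with a position inside its cluster
`(k, k-1, …, w b, w b, …, k-1, k)` of length `2(k+1-w b)`. -/
def FatPos (k m : ℕ) (w : Fin m → ℕ) : Type :=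
  Σ b : Fin m, Fin (2 * (k + 1 - w b))

noncomputable instance (k m : ℕ) (w : Fin m → ℕ) : Fintype (FatPos k m w) := by
  unfold FatPos; infer_instance

/-- The label of a position of the fattening: position `j` inside the cluster of a
bead labeled `a = w b` carries the letter `k - j` in the first (descending) half and
`j + 2a - (k+1)` in the second (ascending) half. -/
def fatLabel (k m : ℕ) (w : Fin m → ℕ) : FatPos k m w → ℕ := fun p =>
  if (p.2 : ℕ) < k + 1 - w p.1 then k - (p.2 : ℕ) else (p.2 : ℕ) + 2 * w p.1 - (k + 1)

/-- The linear (cut) order on positions of the fattening. -/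
def fatLt (k m : ℕ) (w : Fin m → ℕ) (p q : FatPos k m w) : Prop :=
  p.1 < q.1 ∨ (p.1 = q.1 ∧ (p.2 : ℕ) < (q.2 : ℕ))

/-- A selection of `k` beads of the fattening, in increasing order, with pairwise
distinct labels. -/
def IsFatSelection (k m : ℕ) (w : Fin m → ℕ) (f : Fin k → FatPos k m w) : Prop :=
  (∀ i j : Fin k, i < j → fatLt k m w (f i) (f j)) ∧
    Function.Injective fun i => fatLabel k m w (f i)

/-- A bad selection: a selection choosing at least two beads from one and the same
cluster. -/
def BadSelection (k m : ℕ) (w : Fin m → ℕ) (f : Fin k → FatPos k m w) : Prop :=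
  IsFatSelection k m w f ∧ ∃ i j : Fin k, i ≠ j ∧ (f i).1 = (f j).1

/-- The parity of a selection: the sign (inversion parity) of the word consisting of
the `k` chosen labels in order followed by the unique omitted letter of `{0,…,k}`. -/
def fatParity (k m : ℕ) (w : Fin m → ℕ) (f : Fin k → FatPos k m w) : ℤ :=
  let s : Fin (k + 1) → ℕ := fun i =>
    if h : (i : ℕ) < k then fatLabel k m w (f ⟨i, h⟩)
    else k * (k + 1) / 2 - ∑ j : Fin k, fatLabel k m w (f j)
  (-1) ^ (Finset.univ.filter fun q : Fin (k + 1) × Fin (k + 1) =>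
      q.1 < q.2 ∧ s q.2 < s q.1).card

/-!
Inside the cluster of a bead the label of position `j` is `k - min j (rev j)`: a position and
its mirror image carry the same letter and enclose exactly the positions of smaller letter.
In a bad selection let `q` be the chosen bead of smallest letter among those that are not the
smallest-lettered chosen bead `r` of their cluster. Every other chosen bead of that cluster
lies outside the interval spanned by `q` and its mirror, while `r` lies inside it. So `q` and
`r` are neighbours in the selection, and replacing `q` by its mirror while exchanging the two
places yields a bad selection whose word differs by one adjacent transposition of distinct
letters. The new selection carries the same clusters and letters at the two exchanged places,
so the construction applied to it picks the same two places and undoes itself.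
-/

open Finset Function

section AdjacentSwap

variable {n : ℕ}

theorem Equiv.swap_sym2_ne {β : Type*} [DecidableEq β] {a b x y : β}
    (hne : s(x, y) ≠ s(a, b)) :
    s(Equiv.swap a b x, Equiv.swap a b y) ≠ s(a, b) := by
  rw [Ne, Sym2.eq_iff] at hne ⊢
  rw [Equiv.swap_apply_def, Equiv.swap_apply_def]
  split_ifs <;> subst_vars <;> tauto

theorem Fin.swap_lt_swap_iff_of_adjacent {a b x y : Fin n}
    (hab : (a : ℕ) + 1 = b ∨ (b : ℕ) + 1 = a) (hne : s(x, y) ≠ s(a, b)) :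
    Equiv.swap a b x < Equiv.swap a b y ↔ x < y := by
  rw [Ne, Sym2.eq_iff] at hne
  rw [Fin.lt_def, Fin.lt_def, Equiv.swap_apply_def, Equiv.swap_apply_def]
  split_ifs <;> subst_vars <;> simp only [Fin.ext_iff, true_and, and_true, true_or, or_true,
    not_true_eq_false, lt_self_iff_false, iff_self] at * <;> omega

variable {α : Type*} [LinearOrder α]

def invCount (s : Fin n → α) : ℕ := #{q : Fin n × Fin n | q.1 < q.2 ∧ s q.2 < s q.1}

theorem invCount_comp_swap_of_lt {s : Fin n → α} {a b : Fin n} (hab : (a : ℕ) + 1 = b)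
    (hs : s a < s b) : invCount (s ∘ Equiv.swap a b) = invCount s + 1 := by
  have hlt : a < b := Fin.lt_def.mpr (by omega)
  have hinv : univ.filter (fun q : Fin n × Fin n =>
        q.1 < q.2 ∧ (s ∘ Equiv.swap a b) q.2 < (s ∘ Equiv.swap a b) q.1) =
      cons (a, b) ((univ.filter fun q : Fin n × Fin n => q.1 < q.2 ∧ s q.2 < s q.1).map
        ((Equiv.swap a b).prodCongr (Equiv.swap a b)).toEmbedding)
        (by simp [hlt.le]) := by
    ext ⟨x, y⟩
    simp only [mem_cons, mem_map_equiv, mem_filter_univ, Equiv.prodCongr_symm,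
      Equiv.prodCongr_apply, Prod.map, Equiv.symm_swap, comp_apply, Prod.mk.injEq]
    by_cases hxy : s(x, y) = s(a, b)
    · rcases Sym2.eq_iff.mp hxy with ⟨rfl, rfl⟩ | ⟨rfl, rfl⟩
      · simp [hlt, hs]
      · simp [hlt.ne', hs.le]
    · rw [Fin.swap_lt_swap_iff_of_adjacent (Or.inl hab) hxy]
      have : ¬(x = a ∧ y = b) := fun h => hxy (by rw [h.1, h.2])
      tauto
  rw [invCount, hinv, card_cons, card_map, invCount]

theorem neg_one_pow_invCount_comp_swap {s : Fin n → α} {a b : Fin n}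
    (hab : (a : ℕ) + 1 = b ∨ (b : ℕ) + 1 = a) (hs : s a ≠ s b) :
    (-1 : ℤ) ^ invCount (s ∘ Equiv.swap a b) = -(-1) ^ invCount s := by
  wlog hab' : (a : ℕ) + 1 = b generalizing a b
  · rw [Equiv.swap_comm]
    exact this hab.symm hs.symm (hab.resolve_left hab')
  rcases hs.lt_or_gt with hlt | hgt
  · rw [invCount_comp_swap_of_lt hab' hlt, pow_succ]
    ring
  · have key := invCount_comp_swap_of_lt (s := s ∘ Equiv.swap a b) hab' (by simpa using hgt)
    rw [show (s ∘ Equiv.swap a b) ∘ Equiv.swap a b = s from funext fun x => by simp] at key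
    rw [key, pow_succ]
    ring

end AdjacentSwap

section OrderFlip

variable {n : ℕ} {α : Type*} [LinearOrder α] {f h : Fin n → α} {a b : Fin n}

theorem adjacent_of_order_flip (hf : StrictMono f) (hab : a ≠ b)
    (hpres : ∀ i j, s(i, j) ≠ s(a, b) → (h i < h j ↔ f i < f j))
    (hflip : ∀ i j, s(i, j) = s(a, b) → (h i < h j ↔ f j < f i)) :
    (a : ℕ) + 1 = b ∨ (b : ℕ) + 1 = a := by
  wlog hlt : a < b generalizing a b
  · simp only [Sym2.eq_swap (a := a)] at hpres hflip
    exact (this hab.symm hpres hflip (hab.lt_or_gt.resolve_left hlt)).symm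
  by_contra hgap
  have hlt' : (a : ℕ) < b := hlt
  set l : Fin n := ⟨a + 1, by omega⟩
  have hal : a < l := Fin.lt_def.mpr (by simp [l])
  have hlb : l < b := Fin.lt_def.mpr (by simp [l]; omega)
  have hal' : h a < h l := (hpres a l (by simp [hlb.ne, hab])).mpr (hf hal)
  have hlb' : h l < h b := (hpres l b (by simp [hal.ne', hab.symm])).mpr (hf hlb)
  exact (hf hlt).asymm ((hflip a b rfl).mp (hal'.trans hlb'))

theorem strictMono_comp_swap_of_order_flip (hf : StrictMono f)
    (hadj : (a : ℕ) + 1 = b ∨ (b : ℕ) + 1 = a)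
    (hpres : ∀ i j, s(i, j) ≠ s(a, b) → (h i < h j ↔ f i < f j))
    (hflip : ∀ i j, s(i, j) = s(a, b) → (h i < h j ↔ f j < f i)) :
    StrictMono (h ∘ Equiv.swap a b) := by
  intro i j hij
  by_cases hs : s(i, j) = s(a, b)
  · have hswap : Equiv.swap a b i = j ∧ Equiv.swap a b j = i := by
      rcases Sym2.eq_iff.mp hs with ⟨rfl, rfl⟩ | ⟨rfl, rfl⟩ <;> simp
    simp only [comp_apply, hswap]
    exact (hflip j i (by rw [Sym2.eq_swap, hs])).mpr (hf hij)
  · exact (hpres _ _ (Equiv.swap_sym2_ne hs)).mpr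
      (hf ((Fin.swap_lt_swap_iff_of_adjacent hadj hs).mpr hij))

end OrderFlip

section PivotPair

variable {ι β γ : Type*} [LinearOrder γ] {bead : ι → β} {lab : ι → γ} {r q : ι}

def IsPivotPair (bead : ι → β) (lab : ι → γ) (r q : ι) : Prop :=
  bead r = bead q ∧ lab r < lab q ∧
    ∀ i j, bead i = bead j → lab i < lab j → lab q ≤ lab j

theorem IsPivotPair.ne (hp : IsPivotPair bead lab r q) : r ≠ q :=
  fun h => hp.2.1.ne (congrArg lab h)

theorem IsPivotPair.comp_equiv {ι' : Type*} (σ : ι' ≃ ι) (hp : IsPivotPair bead lab r q) :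
    IsPivotPair (bead ∘ σ) (lab ∘ σ) (σ.symm r) (σ.symm q) :=
  ⟨by simpa using hp.1, by simpa using hp.2.1,
    fun i j hij hl => by simpa using hp.2.2 _ _ hij hl⟩

theorem IsPivotPair.lt_of_bead_eq (hinj : Injective lab) (hp : IsPivotPair bead lab r q) {i : ι}
    (hi : bead i = bead q) (hir : i ≠ r) (hiq : i ≠ q) : lab q < lab i := by
  rcases lt_trichotomy (lab i) (lab q) with h | h | h
  · rcases lt_trichotomy (lab i) (lab r) with h' | h' | h'
    · exact absurd (hp.2.2 i r (hi.trans hp.1.symm) h') hp.2.1.not_ge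
    · exact absurd (hinj h') hir
    · exact absurd (hp.2.2 r i (hp.1.trans hi.symm) h') h.not_ge
  · exact absurd (hinj h) hiq
  · exact h

theorem IsPivotPair.unique (hinj : Injective lab) {r' q' : ι} (hp : IsPivotPair bead lab r q)
    (hp' : IsPivotPair bead lab r' q') : r = r' ∧ q = q' := by
  obtain rfl : q = q' :=
    hinj (le_antisymm (hp.2.2 r' q' hp'.1 hp'.2.1) (hp'.2.2 r q hp.1 hp.2.1))
  refine ⟨by_contra fun hne => ?_, rfl⟩
  exact (hp.lt_of_bead_eq hinj hp'.1 (Ne.symm hne) hp'.ne).not_gt hp'.2.1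

theorem exists_isPivotPair [Fintype ι] (hinj : Injective lab) {i j : ι} (hij : i ≠ j)
    (hb : bead i = bead j) : ∃ r q, IsPivotPair bead lab r q := by
  have hne : (univ.filter fun q => ∃ r, bead r = bead q ∧ lab r < lab q).Nonempty := by
    rcases (hinj.ne hij).lt_or_gt with h | h
    · exact ⟨j, by simpa using ⟨i, hb, h⟩⟩
    · exact ⟨i, by simpa using ⟨j, hb.symm, h⟩⟩
  obtain ⟨q, hq, hmin⟩ := exists_min_image _ lab hne
  obtain ⟨r, hr, hlt⟩ := (mem_filter.mp hq).2
  exact ⟨r, q, hr, hlt, fun i j hij hl => hmin j (by simpa using ⟨i, hij, hl⟩)⟩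

end PivotPair

section Fattening

variable {k m : ℕ} {w : Fin m → ℕ} {f : Fin k → FatPos k m w} {r q : Fin k}

def mirror (p : FatPos k m w) : FatPos k m w := ⟨p.1, p.2.rev⟩

def FatPos.bead (p : FatPos k m w) : Fin m := p.1

@[simp] theorem FatPos.bead_mirror (p : FatPos k m w) : (mirror p).bead = p.bead := rfl

@[simp] theorem mirror_mirror (p : FatPos k m w) : mirror (mirror p) = p := by
  change (⟨p.1, p.2.rev.rev⟩ : FatPos k m w) = p
  rw [Fin.rev_rev]
  rfl

theorem fatLabel_eq (p : FatPos k m w) :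
    fatLabel k m w p = k - min (p.2 : ℕ) (p.2.rev : ℕ) := by
  have := p.2.isLt
  unfold fatLabel
  rw [Fin.val_rev]
  split_ifs <;> omega

@[simp] theorem fatLabel_mirror (p : FatPos k m w) :
    fatLabel k m w (mirror p) = fatLabel k m w p := by
  rw [fatLabel_eq, fatLabel_eq, mirror, Fin.rev_rev, min_comm]

def fatKey (p : FatPos k m w) : Fin m ×ₗ ℕ := toLex (p.1, (p.2 : ℕ))

theorem fatLt_iff_fatKey_lt {p q : FatPos k m w} : fatLt k m w p q ↔ fatKey p < fatKey q := by
  rw [fatKey, fatKey, Prod.Lex.toLex_lt_toLex]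
  rfl

theorem fatKey_lt_mirror_iff_of_outer {p x : FatPos k m w}
    (hx : x.1 = p.1 → fatLabel k m w p < fatLabel k m w x) :
    (fatKey x < fatKey (mirror p) ↔ fatKey x < fatKey p) ∧
      (fatKey (mirror p) < fatKey x ↔ fatKey p < fatKey x) := by
  by_cases hxp : x.1 = p.1
  · have hl := hx hxp
    have hw := congrArg w hxp
    have := x.2.isLt
    rw [fatLabel_eq, fatLabel_eq, Fin.val_rev, Fin.val_rev] at hl
    simp only [fatKey, mirror, Prod.Lex.toLex_lt_toLex, hxp, Fin.val_rev, lt_self_iff_false,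
      true_and, false_or]
    omega
  · simp [fatKey, mirror, Prod.Lex.toLex_lt_toLex, hxp, Ne.symm hxp]

theorem fatKey_lt_mirror_iff_of_inner {p x : FatPos k m w} (hxp : x.1 = p.1)
    (hl : fatLabel k m w x < fatLabel k m w p) :
    (fatKey x < fatKey (mirror p) ↔ fatKey p < fatKey x) ∧
      (fatKey (mirror p) < fatKey x ↔ fatKey x < fatKey p) := by
  have hw := congrArg w hxp
  have := x.2.isLt
  rw [fatLabel_eq, fatLabel_eq, Fin.val_rev, Fin.val_rev] at hl
  simp only [fatKey, mirror, Prod.Lex.toLex_lt_toLex, hxp, Fin.val_rev, lt_self_iff_false,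
    true_and, false_or]
  omega

def mirrorSwap (f : Fin k → FatPos k m w) (r q : Fin k) : Fin k → FatPos k m w :=
  update f q (mirror (f q)) ∘ Equiv.swap q r

theorem comp_mirrorSwap {β : Type*} (g : FatPos k m w → β) (hg : ∀ p, g (mirror p) = g p) :
    g ∘ mirrorSwap f r q = (g ∘ f) ∘ Equiv.swap q r := by
  have : g ∘ update f q (mirror (f q)) = g ∘ f := by
    funext i
    rcases eq_or_ne i q with rfl | hi
    · simp [hg]
    · simp [hi]
  rw [mirrorSwap, ← comp_assoc, this]

theorem mirrorSwap_mirrorSwap : mirrorSwap (mirrorSwap f r q) q r = f := by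
  funext i
  rcases eq_or_ne i q with rfl | hiq
  · simp [mirrorSwap]
  · rcases eq_or_ne i r with rfl | hir
    · simp [mirrorSwap, hiq, hiq.symm]
    · simp [mirrorSwap, Equiv.swap_apply_of_ne_of_ne, hiq, hir]

theorem fatKey_update_mirror_lt_iff
    (hp : IsPivotPair (FatPos.bead ∘ f) (fatLabel k m w ∘ f) r q)
    (hinj : Injective (fatLabel k m w ∘ f)) {i j : Fin k} (hij : s(i, j) ≠ s(q, r)) :
    fatKey (update f q (mirror (f q)) i) < fatKey (update f q (mirror (f q)) j) ↔
      fatKey (f i) < fatKey (f j) := by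
  have houter : ∀ l, l ≠ q → l ≠ r → (f l).1 = (f q).1 →
      fatLabel k m w (f q) < fatLabel k m w (f l) :=
    fun l hlq hlr hl => hp.lt_of_bead_eq hinj hl hlr hlq
  rcases eq_or_ne i q with rfl | hiq <;> rcases eq_or_ne j i with rfl | hji
  · simp
  · have hjr : j ≠ r := by rintro rfl; exact hij rfl
    simpa [hji] using (fatKey_lt_mirror_iff_of_outer (houter j hji hjr)).2
  · simp
  · rcases eq_or_ne j q with rfl | hjq
    · have hir : i ≠ r := by rintro rfl; exact hij (Sym2.eq_swap)
      simpa [hiq] using (fatKey_lt_mirror_iff_of_outer (houter i hiq hir)).1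
    · simp [hiq, hjq]

theorem fatKey_update_mirror_lt_iff_of_eq
    (hp : IsPivotPair (FatPos.bead ∘ f) (fatLabel k m w ∘ f) r q) {i j : Fin k}
    (hij : s(i, j) = s(q, r)) :
    fatKey (update f q (mirror (f q)) i) < fatKey (update f q (mirror (f q)) j) ↔
      fatKey (f j) < fatKey (f i) := by
  have hinner := fatKey_lt_mirror_iff_of_inner hp.1 hp.2.1
  rcases Sym2.eq_iff.mp hij with ⟨rfl, rfl⟩ | ⟨rfl, rfl⟩
  · simpa [hp.ne] using hinner.2
  · simpa [hp.ne] using hinner.1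

theorem IsFatSelection.strictMono (hf : IsFatSelection k m w f) : StrictMono (fatKey ∘ f) :=
  fun _ _ hij => fatLt_iff_fatKey_lt.mp (hf.1 _ _ hij)

theorem isFatSelection_mirrorSwap (hf : IsFatSelection k m w f)
    (hp : IsPivotPair (FatPos.bead ∘ f) (fatLabel k m w ∘ f) r q) :
    IsFatSelection k m w (mirrorSwap f r q) ∧ ((q : ℕ) + 1 = r ∨ (r : ℕ) + 1 = q) := by
  have hpres := fun i j => fatKey_update_mirror_lt_iff hp hf.2 (i := i) (j := j)
  have hflip := fun i j => fatKey_update_mirror_lt_iff_of_eq hp (i := i) (j := j)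
  have hadj := adjacent_of_order_flip (h := fatKey ∘ update f q (mirror (f q)))
    hf.strictMono hp.ne.symm hpres hflip
  have hmono := strictMono_comp_swap_of_order_flip hf.strictMono hadj hpres hflip
  refine ⟨⟨fun i j hij => fatLt_iff_fatKey_lt.mpr (hmono hij), ?_⟩, hadj⟩
  rw [show (fun i => fatLabel k m w (mirrorSwap f r q i)) = _ from
    comp_mirrorSwap _ fatLabel_mirror]
  exact hf.2.comp (Equiv.swap q r).injective

def appendMissing (ℓ : Fin k → ℕ) : Fin (k + 1) → ℕ := fun i =>
  if h : (i : ℕ) < k then ℓ ⟨i, h⟩ else k * (k + 1) / 2 - ∑ j, ℓ j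

@[simp] theorem appendMissing_castSucc (ℓ : Fin k → ℕ) (j : Fin k) :
    appendMissing ℓ j.castSucc = ℓ j := by
  simp [appendMissing]

theorem appendMissing_comp_swap (ℓ : Fin k → ℕ) (a b : Fin k) :
    appendMissing (ℓ ∘ Equiv.swap a b) =
      appendMissing ℓ ∘ Equiv.swap a.castSucc b.castSucc := by
  funext i
  induction i using Fin.lastCases with
  | last =>
    rw [comp_apply, Equiv.swap_apply_of_ne_of_ne (Fin.castSucc_ne_last a).symm
      (Fin.castSucc_ne_last b).symm]
    simp [appendMissing, Equiv.sum_comp]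
  | cast j => rw [comp_apply, (Fin.castSucc_injective k).swap_apply]; simp

theorem fatParity_eq (f : Fin k → FatPos k m w) :
    fatParity k m w f = (-1) ^ invCount (appendMissing (fatLabel k m w ∘ f)) := rfl

theorem fatParity_mirrorSwap (hinj : Injective (fatLabel k m w ∘ f))
    (hadj : (q : ℕ) + 1 = r ∨ (r : ℕ) + 1 = q) (hrq : r ≠ q) :
    fatParity k m w (mirrorSwap f r q) = -fatParity k m w f := by
  rw [fatParity_eq, fatParity_eq, comp_mirrorSwap _ fatLabel_mirror, appendMissing_comp_swap]
  exact neg_one_pow_invCount_comp_swap (by simpa using hadj) (by simpa using hinj.ne hrq.symm)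

noncomputable def pivotInvolution (f : Fin k → FatPos k m w) : Fin k → FatPos k m w :=
  if h : ∃ p : Fin k × Fin k, IsPivotPair (FatPos.bead ∘ f) (fatLabel k m w ∘ f) p.1 p.2 then
    mirrorSwap f h.choose.1 h.choose.2
  else f

theorem pivotInvolution_eq (hinj : Injective (fatLabel k m w ∘ f))
    (hp : IsPivotPair (FatPos.bead ∘ f) (fatLabel k m w ∘ f) r q) :
    pivotInvolution f = mirrorSwap f r q := by
  have h : ∃ p : Fin k × Fin k, IsPivotPair (FatPos.bead ∘ f) (fatLabel k m w ∘ f) p.1 p.2 :=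
    ⟨(r, q), hp⟩
  obtain ⟨hr, hq⟩ := h.choose_spec.unique hinj hp
  rw [pivotInvolution, dif_pos h, hr, hq]

theorem pivotInvolution_spec (hf : BadSelection k m w f) :
    BadSelection k m w (pivotInvolution f) ∧ pivotInvolution (pivotInvolution f) = f ∧
      pivotInvolution f ≠ f ∧ fatParity k m w (pivotInvolution f) = -fatParity k m w f := by
  obtain ⟨hsel, i, j, hij, hb⟩ := hf
  obtain ⟨r, q, hp⟩ :=
    exists_isPivotPair (bead := FatPos.bead ∘ f) (lab := fatLabel k m w ∘ f) hsel.2 hij hb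
  obtain ⟨hsel', hadj⟩ := isFatSelection_mirrorSwap hsel hp
  have hp' : IsPivotPair (FatPos.bead ∘ mirrorSwap f r q)
      (fatLabel k m w ∘ mirrorSwap f r q) q r := by
    rw [comp_mirrorSwap _ FatPos.bead_mirror, comp_mirrorSwap _ fatLabel_mirror]
    simpa using hp.comp_equiv (Equiv.swap q r)
  rw [pivotInvolution_eq hsel.2 hp, pivotInvolution_eq hsel'.2 hp', mirrorSwap_mirrorSwap]
  refine ⟨⟨hsel', q, r, hp.ne.symm, hp'.1⟩, rfl, fun heq => ?_,
    fatParity_mirrorSwap hsel.2 hadj hp.ne⟩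
  have hlab := congrArg (fun g => fatLabel k m w (g r)) heq
  simp only [mirrorSwap, comp_apply, Equiv.swap_apply_right, update_self, fatLabel_mirror] at hlab
  exact hp.2.1.ne' hlab

end Fattening

theorem bad_selections_cancel_general (k m : ℕ) (w : Fin m → ℕ) :
    (∃ φ : (Fin k → FatPos k m w) → (Fin k → FatPos k m w),
        ∀ f, BadSelection k m w f →
          BadSelection k m w (φ f) ∧ φ (φ f) = f ∧ φ f ≠ f ∧
            fatParity k m w (φ f) = -fatParity k m w f) ∧
    ∑ f ∈ Finset.univ.filter (BadSelection k m w), fatParity k m w f = 0 := by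
  refine ⟨⟨pivotInvolution, fun f hf => pivotInvolution_spec hf⟩, ?_⟩
  refine Finset.sum_involution (fun f _ => pivotInvolution f) (fun f hf => ?_)
    (fun f hf _ => ?_) (fun f hf => ?_) (fun f hf => ?_) <;>
    obtain ⟨hbad, hinv, hne, hsign⟩ := pivotInvolution_spec (Finset.mem_filter.mp hf).2
  · rw [hsign, add_neg_cancel]
  · exact hne
  · exact Finset.mem_filter.mpr ⟨Finset.mem_univ _, hbad⟩
  · exact hinv

/-- in counting `p(F(ν))` for the fattening of a necklace `ν` on letters
`{1,…,k+1}` (`k+1` odd), the selections choosing at least two beads from the same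
cluster can be partitioned into pairs with opposite permutation parity; consequently
their total signed contribution to `p(F(ν))` is zero. -/
theorem bad_selections_cancel (k m : ℕ) (hodd : Odd (k + 1)) (w : Fin m → ℕ)
    (hw : ∀ b, w b ≤ k) :
    (∃ φ : (Fin k → FatPos k m w) → (Fin k → FatPos k m w),
        ∀ f, BadSelection k m w f →
          BadSelection k m w (φ f) ∧ φ (φ f) = f ∧ φ f ≠ f ∧
            fatParity k m w (φ f) = -fatParity k m w f) ∧
    ∑ f ∈ Finset.univ.filter (BadSelection k m w), fatParity k m w f = 0 :=
  bad_selections_cancel_general k m w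
end

section
/- The face lattice of the associahedron: the poset of collections of pairwise non-crossing diagonals of a convex n-gon (ordered by reverse inclusion, with the empty collection as top element removed appropriately) is graded, and its maximal elements (triangulations of the n-gon) each consist of exactly n − 3 diagonals. -/
/-- The counterclockwise distance from vertex `i` to vertex `j` of the convex `n`-gon
(vertices labeled cyclically by `Fin n`). -/
def arc (n : ℕ) (i j : Fin n) : ℕ := ((j : ℕ) + n - (i : ℕ)) % n

/-- A diagonal of the convex `n`-gon: an unordered pair `{a, b}` of non-adjacent
(hence distinct) vertices. -/
def IsDiag (n : ℕ) (d : Finset (Fin n)) : Prop :=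
  ∃ a b : Fin n, d = {a, b} ∧ 2 ≤ arc n a b ∧ 2 ≤ arc n b a

/-- `x` lies strictly between `a` and `b` in cyclic (counterclockwise) order. -/
def CyclicBtw (n : ℕ) (a b x : Fin n) : Prop := 0 < arc n a x ∧ arc n a x < arc n a b

/-- Two diagonals cross iff they have four distinct endpoints and exactly one endpoint
of the second lies strictly between the endpoints of the first in cyclic order. -/
def Cross (n : ℕ) (d₁ d₂ : Finset (Fin n)) : Prop :=
  ∃ a b c e : Fin n, d₁ = {a, b} ∧ d₂ = {c, e} ∧
    a ≠ b ∧ c ≠ e ∧ a ≠ c ∧ a ≠ e ∧ b ≠ c ∧ b ≠ e ∧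
    Xor' (CyclicBtw n a b c) (CyclicBtw n a b e)

/-- A collection of pairwise non-crossing diagonals of the convex `n`-gon. -/
def NonCrossing (n : ℕ) (S : Finset (Finset (Fin n))) : Prop :=
  (∀ d ∈ S, IsDiag n d) ∧ ∀ d₁ ∈ S, ∀ d₂ ∈ S, d₁ ≠ d₂ → ¬Cross n d₁ d₂

def IsChord (V : Finset ℕ) (p : ℕ × ℕ) : Prop :=
  p.1 ∈ V ∧ p.2 ∈ V ∧ (∃ z ∈ V, p.1 < z ∧ z < p.2) ∧ (∃ w ∈ V, w < p.1 ∨ p.2 < w)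

def Ilv (p q : ℕ × ℕ) : Prop :=
  (p.1 < q.1 ∧ q.1 < p.2 ∧ p.2 < q.2) ∨ (q.1 < p.1 ∧ p.1 < q.2 ∧ q.2 < p.2)

def NCV (V : Finset ℕ) (S : Finset (ℕ × ℕ)) : Prop :=
  (∀ p ∈ S, IsChord V p) ∧ ∀ p ∈ S, ∀ q ∈ S, ¬ Ilv p q

def wid (V : Finset ℕ) (p : ℕ × ℕ) : ℕ := (V.filter fun z => p.1 < z ∧ z < p.2).card

lemma no_inner {V : Finset ℕ} {S : Finset (ℕ × ℕ)} (hS : NCV V S) {p₀ : ℕ × ℕ} (hp : p₀ ∈ S)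
    (hmin : ∀ q ∈ S, wid V p₀ ≤ wid V q) :
    ∀ q ∈ S, (¬ (p₀.1 < q.1 ∧ q.1 < p₀.2)) ∧ (¬ (p₀.1 < q.2 ∧ q.2 < p₀.2)) := by
  intro q hq
  obtain ⟨hq1V, hq2V, ⟨z, hzV, hz1, hz2⟩, -⟩ := hS.1 q hq
  have hq12 : q.1 < q.2 := lt_trans hz1 hz2
  constructor
  · rintro ⟨h1, h2⟩
    rcases lt_or_ge p₀.2 q.2 with h3 | h3
    · exact hS.2 p₀ hp q hq (Or.inl ⟨h1, h2, h3⟩)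
    · have hsub : V.filter (fun z => q.1 < z ∧ z < q.2) ⊆ V.filter (fun z => p₀.1 < z ∧ z < p₀.2) := by
        intro x hx
        obtain ⟨hxV, hx1, hx2⟩ := Finset.mem_filter.1 hx
        exact Finset.mem_filter.2 ⟨hxV, by omega, by omega⟩
      have hmem : q.1 ∈ V.filter (fun z => p₀.1 < z ∧ z < p₀.2) := by
        simp only [Finset.mem_filter]; exact ⟨hq1V, h1, h2⟩
      have hnot : q.1 ∉ V.filter (fun z => q.1 < z ∧ z < q.2) := by
        simp only [Finset.mem_filter]; omega
      have := Finset.card_lt_card ((Finset.ssubset_iff_of_subset hsub).2 ⟨q.1, hmem, hnot⟩)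
      have := hmin q hq
      unfold wid at *
      omega
  · rintro ⟨h1, h2⟩
    rcases lt_or_ge q.1 p₀.1 with h3 | h3
    · exact hS.2 p₀ hp q hq (Or.inr ⟨h3, h1, h2⟩)
    · have hsub : V.filter (fun z => q.1 < z ∧ z < q.2) ⊆ V.filter (fun z => p₀.1 < z ∧ z < p₀.2) := by
        intro x hx
        obtain ⟨hxV, hx1, hx2⟩ := Finset.mem_filter.1 hx
        exact Finset.mem_filter.2 ⟨hxV, by omega, by omega⟩
      have hmem : q.2 ∈ V.filter (fun z => p₀.1 < z ∧ z < p₀.2) := by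
        simp only [Finset.mem_filter]; exact ⟨hq2V, h1, h2⟩
      have hnot : q.2 ∉ V.filter (fun z => q.1 < z ∧ z < q.2) := by
        simp only [Finset.mem_filter]; omega
      have := Finset.card_lt_card ((Finset.ssubset_iff_of_subset hsub).2 ⟨q.2, hmem, hnot⟩)
      have := hmin q hq
      unfold wid at *
      omega

lemma del {V : Finset ℕ} {S : Finset (ℕ × ℕ)} {p₀ : ℕ × ℕ} {v : ℕ} (hS : NCV V S) (hp : p₀ ∈ S)
    (hinner : ∀ q ∈ S, (¬ (p₀.1 < q.1 ∧ q.1 < p₀.2)) ∧ (¬ (p₀.1 < q.2 ∧ q.2 < p₀.2)))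
    (hv : v ∈ V) (hv1 : p₀.1 < v) (hv2 : v < p₀.2) :
    NCV (V.erase v) (S.erase p₀) := by
  obtain ⟨ha, hb, -, -⟩ := hS.1 p₀ hp
  constructor
  · intro q hq'
    have hq := Finset.mem_of_mem_erase hq'
    have hne : q ≠ p₀ := Finset.ne_of_mem_erase hq'
    obtain ⟨h1V, h2V, ⟨z, hzV, hz1, hz2⟩, ⟨w, hwV, hw⟩⟩ := hS.1 q hq
    obtain ⟨hi1, hi2⟩ := hinner q hq
    refine ⟨Finset.mem_erase.2 ⟨by omega, h1V⟩, Finset.mem_erase.2 ⟨by omega, h2V⟩, ?_, ?_⟩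
    · by_cases hzv : z = v
      · subst hzv
        have hne' : q.1 ≠ p₀.1 ∨ q.2 ≠ p₀.2 := by
          by_contra h; push_neg at h; exact hne (Prod.ext h.1 h.2)
        rcases hne' with h | h
        · exact ⟨p₀.1, Finset.mem_erase.2 ⟨by omega, ha⟩, by omega, by omega⟩
        · exact ⟨p₀.2, Finset.mem_erase.2 ⟨by omega, hb⟩, by omega, by omega⟩
      · exact ⟨z, Finset.mem_erase.2 ⟨hzv, hzV⟩, hz1, hz2⟩
    · by_cases hwv : w = v
      · subst hwv
        rcases hw with h | h
        · exact ⟨p₀.1, Finset.mem_erase.2 ⟨by omega, ha⟩, Or.inl (by omega)⟩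
        · exact ⟨p₀.2, Finset.mem_erase.2 ⟨by omega, hb⟩, Or.inr (by omega)⟩
      · exact ⟨w, Finset.mem_erase.2 ⟨hwv, hwV⟩, hw⟩
  · intro p hp' q hq'
    exact hS.2 p (Finset.mem_of_mem_erase hp') q (Finset.mem_of_mem_erase hq')

lemma ilv_irrefl (p : ℕ × ℕ) : ¬ Ilv p p := by simp only [Ilv]; omega

lemma boundA : ∀ (k : ℕ) (V : Finset ℕ) (S : Finset (ℕ × ℕ)), V.card ≤ k → NCV V S →
    S = ∅ ∨ S.card + 3 ≤ V.card := by
  intro k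
  induction k with
  | zero =>
    intro V S hV hS
    left
    rcases Finset.eq_empty_or_nonempty S with h | ⟨p, hp⟩
    · exact h
    · exfalso
      obtain ⟨h1, -, -, -⟩ := hS.1 p hp
      have := Finset.card_pos.2 ⟨p.1, h1⟩
      omega
  | succ k ih =>
    intro V S hV hS
    rcases Finset.eq_empty_or_nonempty S with h | hne
    · exact Or.inl h
    right
    obtain ⟨p₀, hp₀, hmin⟩ := Finset.exists_min_image S (wid V) hne
    obtain ⟨haV, hbV, ⟨v, hvV, hv1, hv2⟩, ⟨w, hwV, hw⟩⟩ := hS.1 p₀ hp₀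
    have h4 : 4 ≤ V.card := by
      have hsub : ({w, p₀.1, v, p₀.2} : Finset ℕ) ⊆ V := by
        intro x hx
        simp only [Finset.mem_insert, Finset.mem_singleton] at hx
        rcases hx with rfl | rfl | rfl | rfl <;> assumption
      have hcard : ({w, p₀.1, v, p₀.2} : Finset ℕ).card = 4 := by
        rw [Finset.card_insert_of_notMem (by simp; omega),
            Finset.card_insert_of_notMem (by simp; omega),
            Finset.card_insert_of_notMem (by simp; omega),
            Finset.card_singleton]
      calc 4 = ({w, p₀.1, v, p₀.2} : Finset ℕ).card := hcard.symm
        _ ≤ V.card := Finset.card_le_card hsub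
    have hdel := del hS hp₀ (no_inner hS hp₀ hmin) hvV hv1 hv2
    have hcards : (V.erase v).card = V.card - 1 := Finset.card_erase_of_mem hvV
    have hS1 : 1 ≤ S.card := Finset.card_pos.2 hne
    have hcS : (S.erase p₀).card = S.card - 1 := Finset.card_erase_of_mem hp₀
    rcases ih (V.erase v) (S.erase p₀) (by omega) hdel with h | h
    · have : (S.erase p₀).card = 0 := by rw [h]; rfl
      omega
    · omega

lemma boundB : ∀ (k : ℕ) (V : Finset ℕ) (S : Finset (ℕ × ℕ)), V.card ≤ k → NCV V S →
    (∀ p, IsChord V p → p ∉ S → ¬ NCV V (insert p S)) → V.card ≤ S.card + 3 := by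
  intro k
  induction k with
  | zero => intro V S hV _ _; omega
  | succ k ih =>
    intro V S hV hS hM
    rcases le_or_gt V.card 3 with h3 | h3
    · omega
    rcases Finset.eq_empty_or_nonempty S with rfl | hne
    · exfalso
      have hVne : V.Nonempty := Finset.card_pos.1 (by omega)
      set m := V.min' hVne with hm
      set M := V.max' hVne with hMdef
      have hm2ne : (V.erase m).Nonempty := by
        apply Finset.card_pos.1
        have := Finset.pred_card_le_card_erase (s := V) (a := m)
        omega
      set m2 := (V.erase m).min' hm2ne with hm2
      have hm2V : m2 ∈ V := Finset.mem_of_mem_erase ((V.erase m).min'_mem hm2ne)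
      have hmm2 : m < m2 :=
        lt_of_le_of_ne (V.min'_le _ hm2V)
          (Ne.symm (Finset.ne_of_mem_erase ((V.erase m).min'_mem hm2ne)))
      have hyne : (((V.erase m).erase m2).erase M).Nonempty := by
        apply Finset.card_pos.1
        have h1 := Finset.pred_card_le_card_erase (s := V) (a := m)
        have h2 := Finset.pred_card_le_card_erase (s := V.erase m) (a := m2)
        have h3 := Finset.pred_card_le_card_erase (s := (V.erase m).erase m2) (a := M)
        omega
      obtain ⟨y, hy⟩ := hyne
      have hyV : y ∈ V := Finset.mem_of_mem_erase (Finset.mem_of_mem_erase (Finset.mem_of_mem_erase hy))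
      have hyM : y ≠ M := Finset.ne_of_mem_erase hy
      have hym2 : y ≠ m2 := Finset.ne_of_mem_erase (Finset.mem_of_mem_erase hy)
      have hym : y ≠ m := Finset.ne_of_mem_erase (Finset.mem_of_mem_erase (Finset.mem_of_mem_erase hy))
      have hym2' : m2 < y :=
        lt_of_le_of_ne ((V.erase m).min'_le y (Finset.mem_erase.2 ⟨hym, hyV⟩)) (Ne.symm hym2)
      have hyM' : y < M := lt_of_le_of_ne (V.le_max' y hyV) hyM
      have hchord : IsChord V (m2, M) :=
        ⟨hm2V, V.max'_mem hVne, ⟨y, hyV, hym2', hyM'⟩, ⟨m, V.min'_mem hVne, Or.inl hmm2⟩⟩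
      apply hM (m2, M) hchord (Finset.notMem_empty _)
      constructor
      · intro p hp
        rcases Finset.mem_insert.1 hp with rfl | hp
        · exact hchord
        · exact absurd hp (Finset.notMem_empty _)
      · intro p hp q hq
        rcases Finset.mem_insert.1 hp with rfl | hp
        · rcases Finset.mem_insert.1 hq with rfl | hq
          · exact ilv_irrefl _
          · exact absurd hq (Finset.notMem_empty _)
        · exact absurd hp (Finset.notMem_empty _)
    · obtain ⟨p₀, hp₀, hmin⟩ := Finset.exists_min_image S (wid V) hne
      have hinner := no_inner hS hp₀ hmin
      obtain ⟨haV, hbV, ⟨v₀, hv₀V, hv₀1, hv₀2⟩, ⟨w, hwV, hw⟩⟩ := hS.1 p₀ hp₀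
      have hv₀F : v₀ ∈ V.filter (fun z => p₀.1 < z ∧ z < p₀.2) :=
        Finset.mem_filter.2 ⟨hv₀V, hv₀1, hv₀2⟩
      have hFcard : (V.filter (fun z => p₀.1 < z ∧ z < p₀.2)).card = 1 := by
        by_contra hne1
        have hFpos : 0 < (V.filter (fun z => p₀.1 < z ∧ z < p₀.2)).card :=
          Finset.card_pos.2 ⟨v₀, hv₀F⟩
        have h2le : 1 < (V.filter (fun z => p₀.1 < z ∧ z < p₀.2)).card := by omega
        have hFne : (V.filter (fun z => p₀.1 < z ∧ z < p₀.2)).Nonempty := ⟨v₀, hv₀F⟩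
        obtain ⟨u, hu, hune⟩ := Finset.exists_mem_ne h2le
          ((V.filter (fun z => p₀.1 < z ∧ z < p₀.2)).min' hFne)
        have hvF := (V.filter (fun z => p₀.1 < z ∧ z < p₀.2)).min'_mem hFne
        set v := (V.filter (fun z => p₀.1 < z ∧ z < p₀.2)).min' hFne with hvdef
        have hvV : v ∈ V := (Finset.mem_filter.1 hvF).1
        have hv1 := (Finset.mem_filter.1 hvF).2
        have huV : u ∈ V := (Finset.mem_filter.1 hu).1
        have hu1 := (Finset.mem_filter.1 hu).2
        have hvu : v < u :=
          lt_of_le_of_ne ((V.filter (fun z => p₀.1 < z ∧ z < p₀.2)).min'_le u hu) (Ne.symm hune)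
        have hchord : IsChord V (v, p₀.2) :=
          ⟨hvV, hbV, ⟨u, huV, hvu, hu1.2⟩, ⟨p₀.1, haV, Or.inl hv1.1⟩⟩
        have hnotin : (v, p₀.2) ∉ S := by
          intro hmem
          have := (hinner _ hmem).1
          simp only at this
          omega
        apply hM (v, p₀.2) hchord hnotin
        constructor
        · intro q hq
          rcases Finset.mem_insert.1 hq with rfl | hq
          · exact hchord
          · exact hS.1 q hq
        · intro q hq r hr
          rcases Finset.mem_insert.1 hq with rfl | hq <;> rcases Finset.mem_insert.1 hr with rfl | hr
          · exact ilv_irrefl _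
          · intro hI
            have h1 := (hinner r hr).1
            have h2 := (hinner r hr).2
            simp only [Ilv] at hI
            omega
          · intro hI
            have h1 := (hinner q hq).1
            have h2 := (hinner q hq).2
            simp only [Ilv] at hI
            omega
          · exact hS.2 q hq r hr
      have hFv : V.filter (fun z => p₀.1 < z ∧ z < p₀.2) = {v₀} := by
        obtain ⟨x, hx⟩ := Finset.card_eq_one.1 hFcard
        have : v₀ = x := by rw [hx] at hv₀F; simpa using hv₀F
        rw [hx, this]
      have hdel := del hS hp₀ hinner hv₀V hv₀1 hv₀2
      have hkey : ∀ x ∈ V.erase v₀, ¬(p₀.1 < x ∧ x < p₀.2) := by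
        intro x hx hin
        have hxF : x ∈ V.filter (fun z => p₀.1 < z ∧ z < p₀.2) :=
          Finset.mem_filter.2 ⟨Finset.mem_of_mem_erase hx, hin⟩
        rw [hFv] at hxF
        simp only [Finset.mem_singleton] at hxF
        exact (Finset.mem_erase.1 hx).1 hxF
      have hM' : ∀ p, IsChord (V.erase v₀) p → p ∉ S.erase p₀ →
          ¬ NCV (V.erase v₀) (insert p (S.erase p₀)) := by
        intro p hch hnot hNC'
        obtain ⟨h1V', h2V', ⟨z, hzV', hz1, hz2⟩, ⟨w', hw'V', hw'⟩⟩ := hch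
        have hp1V := Finset.mem_of_mem_erase h1V'
        have hp2V := Finset.mem_of_mem_erase h2V'
        have hchV : IsChord V p :=
          ⟨hp1V, hp2V, ⟨z, Finset.mem_of_mem_erase hzV', hz1, hz2⟩,
           ⟨w', Finset.mem_of_mem_erase hw'V', hw'⟩⟩
        have hpnotS : p ∉ S := by
          intro hmem
          have hne' : p ≠ p₀ := by
            rintro rfl
            exact hkey z hzV' ⟨hz1, hz2⟩
          exact hnot (Finset.mem_erase.2 ⟨hne', hmem⟩)
        apply hM p hchV hpnotS
        constructor
        · intro q hq
          rcases Finset.mem_insert.1 hq with rfl | hq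
          · exact hchV
          · exact hS.1 q hq
        · have hqp₀ : ¬ Ilv p p₀ := by
            intro hI
            simp only [Ilv] at hI
            rcases hI with ⟨h1, h2, h3⟩ | ⟨h1, h2, h3⟩
            · exact hkey p.2 h2V' ⟨h2, h3⟩
            · exact hkey p.1 h1V' ⟨h1, h2⟩
          have hp₀p : ¬ Ilv p₀ p := by
            intro hI
            simp only [Ilv] at hI
            rcases hI with ⟨h1, h2, h3⟩ | ⟨h1, h2, h3⟩
            · exact hkey p.1 h1V' ⟨h1, h2⟩
            · exact hkey p.2 h2V' ⟨h2, h3⟩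
          intro q hq r hr
          rcases Finset.mem_insert.1 hq with hqq | hqS <;> rcases Finset.mem_insert.1 hr with hrr | hrS
          · subst hqq; subst hrr; exact ilv_irrefl _
          · subst hqq
            by_cases hrp : r = p₀
            · subst hrp; exact hqp₀
            · exact hNC'.2 _ (Finset.mem_insert_self _ _)
                r (Finset.mem_insert_of_mem (Finset.mem_erase.2 ⟨hrp, hrS⟩))
          · subst hrr
            by_cases hqp : q = p₀
            · subst hqp; exact hp₀p
            · exact hNC'.2 q (Finset.mem_insert_of_mem (Finset.mem_erase.2 ⟨hqp, hqS⟩))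
                _ (Finset.mem_insert_self _ _)
          · exact hS.2 q hqS r hrS
      have hIH := ih (V.erase v₀) (S.erase p₀)
        (by rw [Finset.card_erase_of_mem hv₀V]; omega) hdel hM'
      have hcV := Finset.card_erase_of_mem hv₀V
      have hcS := Finset.card_erase_of_mem hp₀
      have hS1 : 1 ≤ S.card := Finset.card_pos.2 hne
      omega


lemma arc_eq {n : ℕ} (i j : Fin n) :
    arc n i j = if (i : ℕ) ≤ (j : ℕ) then (j : ℕ) - i else (j : ℕ) + n - i := by
  have hi := i.isLt; have hj := j.isLt
  unfold arc
  split_ifs with h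
  · rw [show (j : ℕ) + n - i = ((j : ℕ) - i) + n by omega, Nat.add_mod_right]
    exact Nat.mod_eq_of_lt (by omega)
  · exact Nat.mod_eq_of_lt (by omega)

lemma cyclicBtw_iff {n : ℕ} (a b x : Fin n) :
    CyclicBtw n a b x ↔ (if (a : ℕ) ≤ (b : ℕ) then (a : ℕ) < x ∧ (x : ℕ) < b
                         else ((x : ℕ) < b ∨ (a : ℕ) < x)) := by
  have := a.isLt; have := b.isLt; have := x.isLt
  unfold CyclicBtw
  rw [arc_eq, arc_eq]
  split_ifs <;> omega

lemma pair_cases {α : Type*} [DecidableEq α] {a b c e : α}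
    (h : ({a, b} : Finset α) = {c, e}) (hab : a ≠ b) :
    (a = c ∧ b = e) ∨ (a = e ∧ b = c) := by
  have ha : a ∈ ({c, e} : Finset α) := h ▸ (by simp)
  have hb : b ∈ ({c, e} : Finset α) := h ▸ (by simp)
  have hc : c ∈ ({a, b} : Finset α) := h.symm ▸ (by simp)
  simp only [Finset.mem_insert, Finset.mem_singleton] at ha hb hc
  rcases ha with rfl | rfl <;> rcases hb with rfl | rfl <;> tauto

lemma cross_iff {n : ℕ} {a b c e : Fin n} (hab : (a : ℕ) < b) (hce : (c : ℕ) < e) :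
    Cross n {a, b} {c, e} ↔ Ilv ((a : ℕ), (b : ℕ)) ((c : ℕ), (e : ℕ)) := by
  have ha := a.isLt; have hb := b.isLt; have hc := c.isLt; have he := e.isLt
  constructor
  · rintro ⟨a', b', c', e', h1, h2, hab', hce', h13, h14, h23, h24, hxor⟩
    have hv : ∀ (x y : Fin n), x ≠ y → (x : ℕ) ≠ (y : ℕ) := fun x y hxy h => hxy (Fin.val_injective h)
    rcases pair_cases h1 (Fin.ne_of_val_ne hab.ne) with ⟨rfl, rfl⟩ | ⟨rfl, rfl⟩ <;>
      rcases pair_cases h2 (Fin.ne_of_val_ne hce.ne) with ⟨rfl, rfl⟩ | ⟨rfl, rfl⟩ <;>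
      [skip; skip; skip; skip] <;>
    · have k1 := hv _ _ h13; have k2 := hv _ _ h14
      have k3 := hv _ _ h23; have k4 := hv _ _ h24
      simp only [cyclicBtw_iff, Xor', xor_def] at hxor
      simp only [Ilv]
      split_ifs at hxor <;> omega
  · intro hI
    have hI' := hI
    simp only [Ilv] at hI'
    refine ⟨a, b, c, e, rfl, rfl, ?_, ?_, ?_, ?_, ?_, ?_, ?_⟩
    · exact Fin.ne_of_val_ne (by omega)
    · exact Fin.ne_of_val_ne (by omega)
    · exact Fin.ne_of_val_ne (by omega)
    · exact Fin.ne_of_val_ne (by omega)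
    · exact Fin.ne_of_val_ne (by omega)
    · exact Fin.ne_of_val_ne (by omega)
    · simp only [cyclicBtw_iff, Xor', xor_def]
      split_ifs <;> omega

lemma chord_of_arcs {n : ℕ} (a b : Fin n) (hlt : (a : ℕ) < b) (h1 : 2 ≤ arc n a b)
    (h2 : 2 ≤ arc n b a) : IsChord (Finset.range n) ((a : ℕ), (b : ℕ)) := by
  have ha := a.isLt; have hb := b.isLt
  rw [arc_eq, if_pos hlt.le] at h1
  rw [arc_eq, if_neg (by omega)] at h2
  refine ⟨Finset.mem_range.2 ha, Finset.mem_range.2 hb,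
    ⟨(a : ℕ) + 1, Finset.mem_range.2 (by omega), by omega, by omega⟩, ?_⟩
  rcases Nat.eq_zero_or_pos (a : ℕ) with h0 | h0
  · exact ⟨n - 1, Finset.mem_range.2 (by omega), Or.inr (by omega)⟩
  · exact ⟨0, Finset.mem_range.2 (by omega), Or.inl h0⟩

lemma diag_rep {n : ℕ} {d : Finset (Fin n)} (h : IsDiag n d) :
    ∃ a b : Fin n, d = {a, b} ∧ (a : ℕ) < (b : ℕ) ∧ IsChord (Finset.range n) ((a : ℕ), (b : ℕ)) := by
  obtain ⟨a, b, rfl, h1, h2⟩ := h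
  have ha := a.isLt; have hb := b.isLt
  rcases lt_trichotomy (a : ℕ) (b : ℕ) with hlt | heq | hgt
  · exact ⟨a, b, rfl, hlt, chord_of_arcs a b hlt h1 h2⟩
  · exfalso
    rw [arc_eq] at h1
    split_ifs at h1 <;> omega
  · exact ⟨b, a, Finset.pair_comm a b, hgt, chord_of_arcs b a hgt h2 h1⟩

lemma diag_of_chord {n : ℕ} (a b : Fin n) (h : IsChord (Finset.range n) ((a : ℕ), (b : ℕ))) :
    IsDiag n {a, b} := by
  obtain ⟨-, -, ⟨z, hz, hz1, hz2⟩, ⟨w, hw, hww⟩⟩ := h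
  rw [Finset.mem_range] at hz hw
  have ha := a.isLt; have hb := b.isLt
  refine ⟨a, b, rfl, ?_, ?_⟩ <;> rw [arc_eq] <;> split_ifs <;> omega

def fpr {n : ℕ} (d : Finset (Fin n)) : ℕ × ℕ :=
  ((d.image Fin.val).min.getD 0, (d.image Fin.val).max.getD 0)

lemma fpr_pair {n : ℕ} (a b : Fin n) (h : (a : ℕ) < (b : ℕ)) :
    fpr ({a, b} : Finset (Fin n)) = ((a : ℕ), (b : ℕ)) := by
  unfold fpr
  rw [Finset.image_insert, Finset.image_singleton]
  rw [Finset.min_insert, Finset.min_singleton, Finset.max_insert, Finset.max_singleton]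
  rw [← WithTop.coe_min, ← WithBot.coe_max]
  simp [min_eq_left h.le, max_eq_right h.le]
  exact ⟨rfl, rfl⟩

/-- the poset of collections of pairwise non-crossing diagonals of a
convex `n`-gon is graded with rank function the cardinality: every collection has at
most `n - 3` diagonals, every non-maximal collection can be extended by one diagonal,
and the maximal elements (the triangulations) consist of exactly `n - 3` diagonals. -/
theorem associahedron_graded (n : ℕ) (hn : 3 ≤ n) :
    (∀ S : Finset (Finset (Fin n)), NonCrossing n S → S.card ≤ n - 3) ∧
    (∀ S : Finset (Finset (Fin n)), NonCrossing n S → S.card < n - 3 →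
      ∃ d ∉ S, NonCrossing n (insert d S)) ∧
    (∀ S : Finset (Finset (Fin n)), NonCrossing n S →
      (∀ T : Finset (Finset (Fin n)), NonCrossing n T → S ⊆ T → T = S) →
      S.card = n - 3) := by
  classical
  have hrange : (Finset.range n).card = n := Finset.card_range n
  have card_Nset : ∀ S : Finset (Finset (Fin n)), NonCrossing n S →
      (S.image fpr).card = S.card := by
    intro S hS
    apply Finset.card_image_of_injOn
    intro d₁ hd₁ d₂ hd₂ hEq
    obtain ⟨a, b, rfl, hab, -⟩ := diag_rep (hS.1 d₁ hd₁)
    obtain ⟨c, e, rfl, hce, -⟩ := diag_rep (hS.1 d₂ hd₂)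
    rw [fpr_pair _ _ hab, fpr_pair _ _ hce] at hEq
    have h1 : a = c := Fin.val_injective (congrArg Prod.fst hEq)
    have h2 : b = e := Fin.val_injective (congrArg Prod.snd hEq)
    rw [h1, h2]
  have bridge1 : ∀ S : Finset (Finset (Fin n)), NonCrossing n S →
      NCV (Finset.range n) (S.image fpr) := by
    intro S h
    constructor
    · intro p hp
      obtain ⟨d, hd, rfl⟩ := Finset.mem_image.1 hp
      obtain ⟨a, b, rfl, hlt, hch⟩ := diag_rep (h.1 d hd)
      rwa [fpr_pair a b hlt]
    · intro p hp q hq hIlv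
      obtain ⟨d₁, hd₁, rfl⟩ := Finset.mem_image.1 hp
      obtain ⟨d₂, hd₂, rfl⟩ := Finset.mem_image.1 hq
      obtain ⟨a, b, rfl, hab, -⟩ := diag_rep (h.1 d₁ hd₁)
      obtain ⟨c, e, rfl, hce, -⟩ := diag_rep (h.1 d₂ hd₂)
      rw [fpr_pair _ _ hab, fpr_pair _ _ hce] at hIlv
      have hne : ({a, b} : Finset (Fin n)) ≠ {c, e} := by
        intro hEq
        rcases pair_cases hEq (Fin.ne_of_val_ne hab.ne) with ⟨h1, h2⟩ | ⟨h1, h2⟩ <;>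
        · have e1 := congrArg Fin.val h1
          have e2 := congrArg Fin.val h2
          simp only [Ilv] at hIlv
          omega
      exact h.2 _ hd₁ _ hd₂ hne ((cross_iff hab hce).2 hIlv)
  have part1 : ∀ S : Finset (Finset (Fin n)), NonCrossing n S → S.card ≤ n - 3 := by
    intro S hS
    have h1 := bridge1 S hS
    have hc := card_Nset S hS
    rcases boundA (Finset.range n).card _ _ le_rfl h1 with h | h
    · rw [h] at hc
      simp only [Finset.card_empty] at hc
      omega
    · rw [hrange] at h
      omega
  have part2 : ∀ S : Finset (Finset (Fin n)), NonCrossing n S → S.card < n - 3 →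
      ∃ d ∉ S, NonCrossing n (insert d S) := by
    intro S hS hcard
    by_contra hno
    push_neg at hno
    have hmax : ∀ p, IsChord (Finset.range n) p → p ∉ S.image fpr →
        ¬ NCV (Finset.range n) (insert p (S.image fpr)) := by
      intro p hchord hpnot hNC
      have h1 : p.1 < n := Finset.mem_range.1 hchord.1
      have h2 : p.2 < n := Finset.mem_range.1 hchord.2.1
      have hch0 := hchord
      obtain ⟨-, -, ⟨z, -, hz1, hz2⟩, -⟩ := hchord
      have hplt : p.1 < p.2 := by omega
      set A : Fin n := ⟨p.1, h1⟩ with hA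
      set B : Fin n := ⟨p.2, h2⟩ with hB
      have hAB : (A : ℕ) < (B : ℕ) := hplt
      have hfd : fpr ({A, B} : Finset (Fin n)) = p := by
        rw [fpr_pair A B hAB]
      have hdnot : ({A, B} : Finset (Fin n)) ∉ S := fun hmem =>
        hpnot (hfd ▸ Finset.mem_image_of_mem fpr hmem)
      apply hno ({A, B} : Finset (Fin n)) hdnot
      have hchord' : IsChord (Finset.range n) ((A : ℕ), (B : ℕ)) := hch0
      constructor
      · intro d' hd'
        rcases Finset.mem_insert.1 hd' with rfl | hd'
        · exact diag_of_chord A B hchord'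
        · exact hS.1 d' hd'
      · intro d₁ hd₁ d₂ hd₂ hne hCross
        have rep : ∀ d' ∈ insert ({A, B} : Finset (Fin n)) S, ∃ a b : Fin n,
            d' = {a, b} ∧ (a : ℕ) < (b : ℕ) ∧ fpr d' ∈ insert p (S.image fpr) := by
          intro d' hd'
          rcases Finset.mem_insert.1 hd' with rfl | hd'
          · exact ⟨A, B, rfl, hAB, by rw [hfd]; exact Finset.mem_insert_self _ _⟩
          · obtain ⟨a, b, hab', hlt, -⟩ := diag_rep (hS.1 d' hd')
            exact ⟨a, b, hab', hlt,
              Finset.mem_insert_of_mem (Finset.mem_image_of_mem _ hd')⟩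
        obtain ⟨a, b, rfl, hab, hm1⟩ := rep d₁ hd₁
        obtain ⟨c, e, rfl, hce, hm2⟩ := rep d₂ hd₂
        have hIlv := (cross_iff hab hce).1 hCross
        rw [fpr_pair _ _ hab] at hm1
        rw [fpr_pair _ _ hce] at hm2
        exact hNC.2 _ hm1 _ hm2 hIlv
    have hB := boundB (Finset.range n).card _ _ le_rfl (bridge1 S hS) hmax
    have hc := card_Nset S hS
    rw [hrange] at hB
    omega
  refine ⟨part1, part2, ?_⟩
  intro S hS hmaxT
  rcases lt_or_ge S.card (n - 3) with h | h
  · obtain ⟨d, hd, hNC⟩ := part2 S hS h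
    have hTeq := hmaxT _ hNC (Finset.subset_insert d S)
    exact absurd (hTeq ▸ Finset.mem_insert_self d S) hd
  · exact le_antisymm (part1 S hS) h
end
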